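/- If a metric space X is large scale separable (there is a countable subset S and r > 0 with B(S,r) = X), then X is large scale weakly paracompact. -/

import Mathlib

/-!
Enumerate the `R`-net as `f 0, f 1, …` and take `A n = B(f n, R + 2s) ∖ ⋃_{k<n} B(f k, R)`.
Removing the earlier `R`-balls makes the family point-finite: a point within `R` of `f m`
lies in no `A n` with `n > m`. Removing only `R`-balls, while the first index `n` with
`x ∈ B(f n, R + s)` is used, keeps the whole ball `B(x, s)` inside `A n`.
-/

/-- A family of subsets covers `X`. -/
def IsCover {X : Type*} (U : Set (Set X)) : Prop := ∀ x : X, ∃ A ∈ U, x ∈ A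

/-- A family of subsets of a metric space is uniformly bounded. -/
def UniformlyBounded {X : Type*} [MetricSpace X] (U : Set (Set X)) : Prop :=
  ∃ M : ℝ, ∀ A ∈ U, ∀ x ∈ A, ∀ y ∈ A, dist x y ≤ M

/-- `X` is large scale weakly paracompact: for all `r, s > 0` there is a uniformly
bounded cover of Lebesgue number at least `s` (every `s`-ball lies in some element)
such that every `r`-ball is contained in only finitely many elements. -/
def LSWeaklyParacompact (X : Type*) [MetricSpace X] : Prop :=
  ∀ r s : ℝ, 0 < r → 0 < s → ∃ U : Set (Set X), IsCover U ∧ UniformlyBounded U ∧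
    (∀ x : X, ∃ A ∈ U, Metric.ball x s ⊆ A) ∧
    ∀ x : X, {A ∈ U | Metric.ball x r ⊆ A}.Finite

open Metric

lemma LSWeaklyParacompact.of_isEmpty (X : Type*) [MetricSpace X] [IsEmpty X] :
    LSWeaklyParacompact X := fun _ _ _ _ =>
  ⟨∅, isEmptyElim, ⟨0, by simp⟩, isEmptyElim, isEmptyElim⟩

section PeeledBall

variable {X : Type*} [MetricSpace X]

def peeledBall (f : ℕ → X) (R s : ℝ) (n : ℕ) : Set X :=
  ball (f n) (R + 2 * s) \ ⋃ k < n, ball (f k) R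

variable {f : ℕ → X} {R s : ℝ}

lemma le_of_mem_peeledBall {x : X} {n m : ℕ} (hx : x ∈ peeledBall f R s n)
    (hm : dist x (f m) < R) : n ≤ m := by
  by_contra! hmn
  exact hx.2 (Set.mem_biUnion hmn hm)

lemma setOf_mem_peeledBall_finite (hf : ∀ x, ∃ n, dist x (f n) < R) (x : X) :
    {n | x ∈ peeledBall f R s n}.Finite := by
  obtain ⟨m, hm⟩ := hf x
  exact (Set.finite_Iic m).subset fun n hn => le_of_mem_peeledBall hn hm

lemma dist_le_of_mem_peeledBall {x y : X} {n : ℕ} (hx : x ∈ peeledBall f R s n)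
    (hy : y ∈ peeledBall f R s n) : dist x y ≤ 2 * (R + 2 * s) := by
  have := dist_triangle_right x y (f n)
  have hx' := mem_ball.1 hx.1
  have hy' := mem_ball.1 hy.1
  linarith

lemma exists_ball_subset_peeledBall (hf : ∀ x, ∃ n, dist x (f n) < R) (hs : 0 ≤ s) (x : X) :
    ∃ n, ball x s ⊆ peeledBall f R s n := by
  have hx : ∃ n, dist x (f n) < R + s := (hf x).imp fun _ h => by linarith
  refine ⟨Nat.find hx, fun y hy => ⟨?_, ?_⟩⟩
  · have := dist_triangle y x (f (Nat.find hx))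
    have := Nat.find_spec hx
    rw [mem_ball] at hy ⊢
    linarith
  · simp only [Set.mem_iUnion, mem_ball, not_exists, not_lt]
    intro k hk
    have := Nat.find_min hx hk
    have := dist_triangle_left x (f k) y
    rw [mem_ball] at hy
    linarith

end PeeledBall

lemma LSWeaklyParacompact.of_seq {X : Type*} [MetricSpace X] (f : ℕ → X) (R : ℝ)
    (hf : ∀ x, ∃ n, dist x (f n) < R) : LSWeaklyParacompact X := by
  intro r s hr hs
  have hball := exists_ball_subset_peeledBall (s := s) hf hs.le
  refine ⟨Set.range (peeledBall f R s), fun x => ?_, ⟨2 * (R + 2 * s), ?_⟩,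
    fun x => ?_, fun x => ?_⟩
  · obtain ⟨n, hn⟩ := hball x
    exact ⟨_, Set.mem_range_self n, hn (mem_ball_self hs)⟩
  · rintro _ ⟨n, rfl⟩ x hx y hy
    exact dist_le_of_mem_peeledBall hx hy
  · obtain ⟨n, hn⟩ := hball x
    exact ⟨_, Set.mem_range_self n, hn⟩
  · refine ((setOf_mem_peeledBall_finite (s := s) hf x).image (peeledBall f R s)).subset ?_
    rintro _ ⟨⟨n, rfl⟩, hsub⟩
    exact ⟨n, hsub (mem_ball_self hr), rfl⟩

theorem stmt_9 {X : Type*} [MetricSpace X]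
    (h : ∃ (S : Set X) (r : ℝ), S.Countable ∧ 0 < r ∧ ∀ x : X, ∃ s ∈ S, dist x s < r) :
    LSWeaklyParacompact X := by
  obtain ⟨S, R, hS, -, hnet⟩ := h
  rcases isEmpty_or_nonempty X with hX | ⟨⟨x₀⟩⟩
  · exact LSWeaklyParacompact.of_isEmpty X
  obtain ⟨s₀, hs₀, -⟩ := hnet x₀
  obtain ⟨f, rfl⟩ := hS.exists_eq_range ⟨s₀, hs₀⟩
  refine LSWeaklyParacompact.of_seq f R fun x => ?_
  obtain ⟨_, ⟨n, rfl⟩, hn⟩ := hnet x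
  exact ⟨n, hn⟩
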